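/- Let n ≥ 1, let f : ℝⁿ × [0,1] → ℝⁿ be continuous, let θ₀ ∈ ℝⁿ, and for each k ∈ ℕ let f_k : [0,1] → ℝⁿ be continuous and x_k : [0,1] → ℝⁿ be given by x_k(t) = θ₀ + ∫_0^t f_k(s) ds. Set b_k(t) = f(x_k(t), t) − f_k(t). Suppose that (i) x_k converges uniformly on [0,1] to a function x : [0,1] → ℝⁿ, (ii) b_k(t) → 0 as k → ∞ for almost every t ∈ [0,1], and (iii) there is a constant M such that ‖b_k(t)‖ ≤ M for all k and all t ∈ [0,1]. Then x(t) = θ₀ + ∫_0^t f(x(s), s) ds for every t ∈ [0,1]; in particular, x is differentiable on (0,1) with x'(t) = f(x(t), t) for all t ∈ (0,1). -/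

import Mathlib

/-!
Along the sequence, `fₖ = f(xₖ, ·) - bₖ`. Uniform convergence keeps every `xₖ` (for large
`k`) in the compact `1`-thickening of the image of `x`, where `f` is bounded, so the `fₖ` are
eventually uniformly bounded; they converge almost everywhere to `f(x, ·)` because `f` is
continuous and `bₖ → 0` a.e. Bounded convergence passes to the limit in
`xₖ(t) = θ₀ + ∫₀ᵗ fₖ`, and the fundamental theorem of calculus gives the derivative.
-/

open MeasureTheory Filter intervalIntegral Set Topology

section Integral

variable {E : Type*} [NormedAddCommGroup E] [NormedSpace ℝ E]

theorem continuousOn_of_eq_const_add_integral {y g : ℝ → E} {c : E} {a b : ℝ}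
    (hg : ContinuousOn g (Icc a b)) (hy : ∀ t ∈ Icc a b, y t = c + ∫ s in a..t, g s) :
    ContinuousOn y (Icc a b) := by
  rcases lt_or_ge b a with hba | hab
  · simp [Icc_eq_empty_of_lt hba]
  rw [← uIcc_of_le hab] at hg hy ⊢
  refine (continuousOn_const.add (continuousOn_primitive_interval ?_)).congr hy
  exact hg.integrableOn_compact isCompact_uIcc

theorem hasDerivAt_of_eq_const_add_integral [CompleteSpace E] {y g : ℝ → E} {c : E}
    {a b t : ℝ}
    (hg : ContinuousOn g (Icc a b)) (hy : ∀ t ∈ Icc a b, y t = c + ∫ s in a..t, g s)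
    (ht : t ∈ Ioo a b) : HasDerivAt y (g t) t := by
  have hI : Icc a b ∈ 𝓝 t := Icc_mem_nhds ht.1 ht.2
  have hderiv : HasDerivAt (fun u => c + ∫ s in a..u, g s) (g t) t :=
    (integral_hasDerivAt_right
      ((hg.mono (uIcc_subset_Icc (left_mem_Icc.2 (ht.1.trans ht.2).le)
        (Ioo_subset_Icc_self ht))).intervalIntegrable)
      ⟨Icc a b, hI, hg.aestronglyMeasurable measurableSet_Icc⟩
      (hg.continuousAt hI)).const_add c
  exact hderiv.congr_of_eventuallyEq (eventually_of_mem hI hy)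

theorem tendsto_intervalIntegral_of_norm_le_of_ae_tendsto {ι : Type*} {l : Filter ι}
    [l.IsCountablyGenerated] {F : ι → ℝ → E} {G : ℝ → E} {a b t C : ℝ}
    (ht : t ∈ Icc a b)
    (hF : ∀ k, AEStronglyMeasurable (F k) (volume.restrict (Icc a b)))
    (hbound : ∀ᶠ k in l, ∀ s ∈ Icc a b, ‖F k s‖ ≤ C)
    (hlim : ∀ᵐ s ∂volume.restrict (Icc a b), Tendsto (F · s) l (𝓝 (G s))) :
    Tendsto (fun k => ∫ s in a..t, F k s) l (𝓝 (∫ s in a..t, G s)) := by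
  have hsub : uIoc a t ⊆ Icc a b :=
    uIoc_subset_uIcc.trans (uIcc_subset_Icc (left_mem_Icc.2 (ht.1.trans ht.2)) ht)
  refine tendsto_integral_filter_of_dominated_convergence (fun _ => C)
    (Eventually.of_forall fun k => (hF k).mono_measure (Measure.restrict_mono hsub le_rfl))
    (hbound.mono fun k hk => Eventually.of_forall fun s hs => hk s (hsub hs))
    intervalIntegrable_const ?_
  filter_upwards [(ae_restrict_iff' measurableSet_Icc).1 hlim] with s hs hst
  exact hs (hsub hst)

end Integral

section Composition

variable {X T F ι : Type*} [PseudoMetricSpace X] [TopologicalSpace T] [SeminormedAddCommGroup F]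
  {l : Filter ι} {f : X → T → F} {S : Set T}

theorem tendsto_apply_of_continuousOn_prod
    (hf : ContinuousOn (fun p : X × T => f p.1 p.2) (univ ×ˢ S))
    {s : T} (hs : s ∈ S) {u : ι → X} {x : X} (hu : Tendsto u l (𝓝 x)) :
    Tendsto (fun k => f (u k) s) l (𝓝 (f x s)) :=
  (hf (x, s) ⟨trivial, hs⟩).tendsto.comp <| tendsto_nhdsWithin_iff.2
    ⟨hu.prodMk_nhds tendsto_const_nhds, Eventually.of_forall fun _ => ⟨trivial, hs⟩⟩

theorem exists_eventually_norm_apply_le_of_tendstoUniformlyOn [ProperSpace X] (hS : IsCompact S)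
    (hf : ContinuousOn (fun p : X × T => f p.1 p.2) (univ ×ˢ S))
    {y : ι → T → X} {x : T → X} (hx : ContinuousOn x S) (hy : TendstoUniformlyOn y x l S) :
    ∃ C, ∀ᶠ k in l, ∀ s ∈ S, ‖f (y k s) s‖ ≤ C := by
  obtain ⟨C, hC⟩ := ((hS.image_of_continuousOn hx).cthickening (r := 1)).prod hS
    |>.exists_bound_of_continuousOn (hf.mono (prod_mono (subset_univ _) subset_rfl))
  refine ⟨C, ?_⟩
  filter_upwards [Metric.tendstoUniformlyOn_iff.1 hy 1 one_pos] with k hk s hs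
  refine hC (y k s, s) ⟨Metric.mem_cthickening_of_dist_le _ (x s) 1 _ ⟨s, hs, rfl⟩ ?_, hs⟩
  exact (dist_comm (x s) (y k s) ▸ hk s hs).le

end Composition

theorem limit_of_approximate_solutions_solves_ode_general
    (n : ℕ)
    (f : EuclideanSpace ℝ (Fin n) → ℝ → EuclideanSpace ℝ (Fin n))
    (hf : ContinuousOn (fun p : EuclideanSpace ℝ (Fin n) × ℝ => f p.1 p.2)
      (Set.univ ×ˢ Set.Icc (0 : ℝ) 1))
    (θ₀ : EuclideanSpace ℝ (Fin n))
    (fk : ℕ → ℝ → EuclideanSpace ℝ (Fin n))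
    (hfk : ∀ k : ℕ, ContinuousOn (fk k) (Set.Icc (0 : ℝ) 1))
    (xk : ℕ → ℝ → EuclideanSpace ℝ (Fin n))
    (hxk : ∀ k : ℕ, ∀ t ∈ Set.Icc (0 : ℝ) 1,
      xk k t = θ₀ + ∫ s in (0 : ℝ)..t, fk k s)
    (b : ℕ → ℝ → EuclideanSpace ℝ (Fin n))
    (hb : ∀ k : ℕ, ∀ t ∈ Set.Icc (0 : ℝ) 1, b k t = f (xk k t) t - fk k t)
    (x : ℝ → EuclideanSpace ℝ (Fin n))
    -- (i) uniform convergence of the approximate solutions on [0,1]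
    (hconv : TendstoUniformlyOn (fun k => xk k) x atTop (Set.Icc (0 : ℝ) 1))
    -- (ii) the residuals tend to 0 for almost every t ∈ [0,1]
    (hres : ∀ᵐ t ∂(volume.restrict (Set.Icc (0 : ℝ) 1)),
      Tendsto (fun k => b k t) atTop (nhds 0))
    -- (iii) uniform bound on the residuals
    (M : ℝ) (hbd : ∀ k : ℕ, ∀ t ∈ Set.Icc (0 : ℝ) 1, ‖b k t‖ ≤ M) :
    (∀ t ∈ Set.Icc (0 : ℝ) 1, x t = θ₀ + ∫ s in (0 : ℝ)..t, f (x s) s) ∧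
      ∀ t ∈ Set.Ioo (0 : ℝ) 1, HasDerivAt x (f (x t) t) t := by
  have hfk_eq : ∀ k, ∀ s ∈ Icc (0 : ℝ) 1, fk k s = f (xk k s) s - b k s := fun k s hs => by
    rw [hb k s hs, sub_sub_cancel]
  have hxc : ContinuousOn x (Icc 0 1) := hconv.continuousOn
    (Eventually.of_forall fun k => continuousOn_of_eq_const_add_integral (hfk k) (hxk k)).frequently
  have hfx : ContinuousOn (fun s => f (x s) s) (Icc 0 1) :=
    hf.comp (hxc.prodMk continuousOn_id) fun s hs => ⟨trivial, hs⟩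
  obtain ⟨C, hC⟩ :=
    exists_eventually_norm_apply_le_of_tendstoUniformlyOn isCompact_Icc hf hxc hconv
  have hfk_bound : ∀ᶠ k in atTop, ∀ s ∈ Icc (0 : ℝ) 1, ‖fk k s‖ ≤ C + M := by
    filter_upwards [hC] with k hk s hs
    exact hfk_eq k s hs ▸ (norm_sub_le _ _).trans (add_le_add (hk s hs) (hbd k s hs))
  have hfk_lim : ∀ᵐ s ∂volume.restrict (Icc (0 : ℝ) 1),
      Tendsto (fun k => fk k s) atTop (𝓝 (f (x s) s)) := by
    filter_upwards [hres, ae_restrict_mem measurableSet_Icc] with s hbs hs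
    simpa only [hfk_eq _ s hs, sub_zero] using
      (tendsto_apply_of_continuousOn_prod hf hs (hconv.tendsto_at hs)).sub hbs
  have hsol : ∀ t ∈ Icc (0 : ℝ) 1, x t = θ₀ + ∫ s in (0 : ℝ)..t, f (x s) s :=
    fun t ht => tendsto_nhds_unique (hconv.tendsto_at ht) <|
      (tendsto_const_nhds.add (tendsto_intervalIntegral_of_norm_le_of_ae_tendsto ht
        (fun k => (hfk k).aestronglyMeasurable measurableSet_Icc) hfk_bound hfk_lim)).congr
        fun k => (hxk k t ht).symm
  exact ⟨hsol, fun t ht =>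
    hasDerivAt_of_eq_const_add_integral (g := fun s => f (x s) s) hfx hsol ht⟩

theorem limit_of_approximate_solutions_solves_ode
    (n : ℕ) (hn : 1 ≤ n)
    (f : EuclideanSpace ℝ (Fin n) → ℝ → EuclideanSpace ℝ (Fin n))
    (hf : ContinuousOn (fun p : EuclideanSpace ℝ (Fin n) × ℝ => f p.1 p.2)
      (Set.univ ×ˢ Set.Icc (0 : ℝ) 1))
    (θ₀ : EuclideanSpace ℝ (Fin n))
    (fk : ℕ → ℝ → EuclideanSpace ℝ (Fin n))
    (hfk : ∀ k : ℕ, ContinuousOn (fk k) (Set.Icc (0 : ℝ) 1))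
    (xk : ℕ → ℝ → EuclideanSpace ℝ (Fin n))
    (hxk : ∀ k : ℕ, ∀ t ∈ Set.Icc (0 : ℝ) 1,
      xk k t = θ₀ + ∫ s in (0 : ℝ)..t, fk k s)
    (b : ℕ → ℝ → EuclideanSpace ℝ (Fin n))
    (hb : ∀ k : ℕ, ∀ t ∈ Set.Icc (0 : ℝ) 1, b k t = f (xk k t) t - fk k t)
    (x : ℝ → EuclideanSpace ℝ (Fin n))
    -- (i) uniform convergence of the approximate solutions on [0,1]
    (hconv : TendstoUniformlyOn (fun k => xk k) x atTop (Set.Icc (0 : ℝ) 1))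
    -- (ii) the residuals tend to 0 for almost every t ∈ [0,1]
    (hres : ∀ᵐ t ∂(volume.restrict (Set.Icc (0 : ℝ) 1)),
      Tendsto (fun k => b k t) atTop (nhds 0))
    -- (iii) uniform bound on the residuals
    (M : ℝ) (hbd : ∀ k : ℕ, ∀ t ∈ Set.Icc (0 : ℝ) 1, ‖b k t‖ ≤ M) :
    (∀ t ∈ Set.Icc (0 : ℝ) 1, x t = θ₀ + ∫ s in (0 : ℝ)..t, f (x s) s) ∧
      ∀ t ∈ Set.Ioo (0 : ℝ) 1, HasDerivAt x (f (x t) t) t :=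
  limit_of_approximate_solutions_solves_ode_general n f hf θ₀ fk hfk xk hxk b hb x hconv hres M hbd
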